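/- Let d ≥ 1 and let n_1 ≥ n_2 ≥ … ≥ n_d ≥ 0 be integers with ∑_{i=1}^d n_i = n ≥ 1. Define DimV = ( n! / ∏_{i=1}^d (n_i + d − i)! ) · ∏_{1 ≤ i < j ≤ d} (n_i − n_j + j − i). Then DimV ≤ (n + d)^{2d} · exp( n · H(n_1/n, …, n_d/n) ), where H(q_1, …, q_d) = −∑_{i=1}^d q_i log q_i with the convention 0·log 0 = 0. -/

import Mathlib

open Finset

/-- Dimension of the irreducible representation of `S_n` for Young index
`(n_1, …, n_d)` (0-indexed as `nv 0 ≥ … ≥ nv (d-1)`), via the explicit formula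
`(n! / ∏ i (n_i + d − i)!) · ∏_{i<j} (n_i − n_j + j − i)`. -/
noncomputable def dimV {d : ℕ} (nv : Fin d → ℕ) (n : ℕ) : ℝ :=
  ((n.factorial : ℝ) / ∏ i : Fin d, ((nv i + (d - 1 - i.val)).factorial : ℝ)) *
    ∏ i : Fin d, ∏ j ∈ Finset.univ.filter (fun j : Fin d => i < j),
      ((nv i : ℝ) - (nv j : ℝ) + (j.val : ℝ) - (i.val : ℝ))

private lemma fact_prod_range (a : ℕ) : ∀ m : ℕ,
    (a.factorial : ℝ) * ∏ k ∈ Finset.range m, ((a : ℝ) + k + 1) = ((a + m).factorial : ℝ)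
  | 0 => by simp
  | m + 1 => by
    rw [Finset.prod_range_succ, ← mul_assoc, fact_prod_range a m]
    have : a + (m + 1) = (a + m) + 1 := by ring
    rw [this, Nat.factorial_succ]
    push_cast
    ring

private lemma prod_filter_shift {d : ℕ} (i : Fin d) (c : ℝ) :
    ∏ j ∈ Finset.univ.filter (fun j : Fin d => i < j), (c + (j.val : ℝ) - (i.val : ℝ)) =
      ∏ k ∈ Finset.range (d - 1 - i.val), (c + k + 1) := by
  refine Finset.prod_nbij' (fun j => j.val - i.val - 1)
    (fun k => ⟨(i.val + k + 1) % d, Nat.mod_lt _ i.pos⟩) ?_ ?_ ?_ ?_ ?_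
  · intro j hj
    simp only [Finset.mem_filter, Fin.lt_def] at hj
    have := j.isLt
    simp only [Finset.mem_range]
    omega
  · intro k hk
    simp only [Finset.mem_range] at hk
    have h1 : i.val + k + 1 < d := by omega
    simp only [Finset.mem_filter, Finset.mem_univ, true_and, Fin.lt_def,
      Nat.mod_eq_of_lt h1]
    omega
  · intro j hj
    simp only [Finset.mem_filter, Fin.lt_def] at hj
    have := j.isLt
    apply Fin.ext
    simp only []
    have h1 : i.val + (j.val - i.val - 1) + 1 = j.val := by omega
    rw [h1, Nat.mod_eq_of_lt this]
  · intro k hk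
    simp only [Finset.mem_range] at hk
    have h1 : i.val + k + 1 < d := by omega
    simp only [Nat.mod_eq_of_lt h1]
    omega
  · intro j hj
    simp only [Finset.mem_filter, Fin.lt_def] at hj
    have h1 : (((j.val - i.val - 1 : ℕ) : ℝ)) = (j.val : ℝ) - (i.val : ℝ) - 1 := by
      have h2 : i.val + 1 ≤ j.val := hj.2
      rw [Nat.cast_sub (by omega : 1 ≤ j.val - i.val), Nat.cast_sub (by omega : i.val ≤ j.val)]
      norm_num
    rw [h1]
    ring

theorem stmt_13 {d : ℕ} (hd : 1 ≤ d) (nv : Fin d → ℕ)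
    (hanti : ∀ i j : Fin d, i ≤ j → nv j ≤ nv i)
    (n : ℕ) (hn : 1 ≤ n) (hsum : ∑ i, nv i = n) :
    dimV nv n ≤ ((n + d : ℕ) : ℝ) ^ (2 * d) *
      Real.exp ((n : ℝ) *
        (-∑ i, ((nv i : ℝ) / (n : ℝ)) * Real.log ((nv i : ℝ) / (n : ℝ)))) := by
  have hn0 : (0 : ℝ) < n := by exact_mod_cast hn
  set q : Fin d → ℝ := fun i => (nv i : ℝ) / n with hq
  have hq0 : ∀ i, 0 ≤ q i := fun i => by positivity
  -- Step A : dimV ≤ multinomial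
  have hA : dimV nv n ≤ (Nat.multinomial Finset.univ nv : ℝ) := by
    unfold dimV
    have hBpos : (0 : ℝ) < ∏ i : Fin d, ((nv i).factorial : ℝ) := by
      apply Finset.prod_pos; intro i _; exact_mod_cast (nv i).factorial_pos
    have hApos : (0 : ℝ) < ∏ i : Fin d, ((nv i + (d - 1 - i.val)).factorial : ℝ) := by
      apply Finset.prod_pos; intro i _; exact_mod_cast (nv i + (d - 1 - i.val)).factorial_pos
    have key : ∀ i : Fin d,
        ∏ j ∈ Finset.univ.filter (fun j : Fin d => i < j),
          ((nv i : ℝ) - (nv j : ℝ) + (j.val : ℝ) - (i.val : ℝ)) ≤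
        ((nv i + (d - 1 - i.val)).factorial : ℝ) / ((nv i).factorial : ℝ) := by
      intro i
      have h1 : ∏ j ∈ Finset.univ.filter (fun j : Fin d => i < j),
          ((nv i : ℝ) - (nv j : ℝ) + (j.val : ℝ) - (i.val : ℝ)) ≤
          ∏ j ∈ Finset.univ.filter (fun j : Fin d => i < j),
          ((nv i : ℝ) + (j.val : ℝ) - (i.val : ℝ)) := by
        apply Finset.prod_le_prod
        · intro j hj
          simp only [Finset.mem_filter, Finset.mem_univ, true_and] at hj
          have h2 : (nv j : ℝ) ≤ (nv i : ℝ) := by exact_mod_cast hanti i j hj.le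
          have h3 : (i.val : ℝ) < (j.val : ℝ) := by exact_mod_cast (Fin.lt_def.mp hj)
          linarith
        · intro j hj
          have : (0 : ℝ) ≤ (nv j : ℝ) := by positivity
          linarith
      refine h1.trans_eq ?_
      rw [prod_filter_shift i ((nv i : ℝ))]
      rw [eq_div_iff (by exact_mod_cast (nv i).factorial_pos.ne')]
      rw [mul_comm]
      exact fact_prod_range (nv i) (d - 1 - i.val)
    have h2 : ∏ i : Fin d, ∏ j ∈ Finset.univ.filter (fun j : Fin d => i < j),
          ((nv i : ℝ) - (nv j : ℝ) + (j.val : ℝ) - (i.val : ℝ)) ≤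
        ∏ i : Fin d, (((nv i + (d - 1 - i.val)).factorial : ℝ) / ((nv i).factorial : ℝ)) := by
      apply Finset.prod_le_prod
      · intro i _
        apply Finset.prod_nonneg
        intro j hj
        simp only [Finset.mem_filter, Finset.mem_univ, true_and] at hj
        have h2 : (nv j : ℝ) ≤ (nv i : ℝ) := by exact_mod_cast hanti i j hj.le
        have h3 : (i.val : ℝ) < (j.val : ℝ) := by exact_mod_cast (Fin.lt_def.mp hj)
        linarith
      · exact fun i _ => key i
    have h3 := mul_le_mul_of_nonneg_left h2
      (le_of_lt (div_pos (show (0:ℝ) < (n.factorial : ℝ) by exact_mod_cast n.factorial_pos) hApos))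
    refine h3.trans_eq ?_
    rw [Finset.prod_div_distrib]
    have hmul : ((∏ i : Fin d, (nv i).factorial : ℕ) : ℝ) * (Nat.multinomial Finset.univ nv : ℝ)
        = (n.factorial : ℝ) := by
      rw [← Nat.cast_mul, Nat.multinomial_spec, hsum]
    push_cast at hmul
    field_simp
    linarith [hmul]
  -- Step B : multinomial ≤ exp (n * H)
  have hT : ∀ i : Fin d, Real.exp (-((nv i : ℝ) * Real.log (q i))) * (q i) ^ (nv i) = 1 := by
    intro i
    rcases Nat.eq_zero_or_pos (nv i) with h | h
    · simp [h]
    · have hqi : 0 < q i := by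
        apply div_pos _ hn0
        exact_mod_cast h
      have : (q i) ^ (nv i) = Real.exp ((nv i : ℝ) * Real.log (q i)) := by
        rw [Real.exp_nat_mul, Real.exp_log hqi]
      rw [this, ← Real.exp_add]
      simp
  have hTpos : 0 < ∏ i : Fin d, (q i) ^ (nv i) := by
    apply Finset.prod_pos
    intro i _
    rcases Nat.eq_zero_or_pos (nv i) with h | h
    · simp [h]
    · have hqi : 0 < q i := div_pos (by exact_mod_cast h) hn0
      positivity
  have hexpT : Real.exp ((n : ℝ) *
        (-∑ i, ((nv i : ℝ) / (n : ℝ)) * Real.log ((nv i : ℝ) / (n : ℝ)))) *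
      ∏ i : Fin d, (q i) ^ (nv i) = 1 := by
    have harg : (n : ℝ) * (-∑ i, ((nv i : ℝ) / (n : ℝ)) * Real.log ((nv i : ℝ) / (n : ℝ)))
        = ∑ i, (-((nv i : ℝ) * Real.log (q i))) := by
      have hterm : ∀ i : Fin d, (n : ℝ) * ((nv i : ℝ) / n * Real.log ((nv i : ℝ) / n))
          = (nv i : ℝ) * Real.log (q i) := by
        intro i
        simp only [hq]
        field_simp
      rw [mul_neg, Finset.mul_sum, Finset.sum_neg_distrib, neg_inj]
      exact Finset.sum_congr rfl fun i _ => hterm i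
    rw [harg, Real.exp_sum, ← Finset.prod_mul_distrib]
    exact Finset.prod_eq_one fun i _ => hT i
  have hB : (Nat.multinomial Finset.univ nv : ℝ) * ∏ i : Fin d, (q i) ^ (nv i) ≤ 1 := by
    have hmt := Finset.sum_pow_eq_sum_piAntidiag (Finset.univ : Finset (Fin d)) q n
    have hsq : ∑ i, q i = 1 := by
      rw [hq, ← Finset.sum_div]
      rw [show ∑ i, ((nv i : ℝ)) = (n : ℝ) by exact_mod_cast congrArg Nat.cast hsum]
      field_simp
    rw [hsq, one_pow] at hmt
    have hmem : nv ∈ Finset.piAntidiag (Finset.univ : Finset (Fin d)) n := by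
      rw [Finset.mem_piAntidiag]
      exact ⟨hsum, fun i _ => Finset.mem_univ i⟩
    calc (Nat.multinomial Finset.univ nv : ℝ) * ∏ i : Fin d, (q i) ^ (nv i)
        ≤ ∑ k ∈ Finset.piAntidiag (Finset.univ : Finset (Fin d)) n,
            (Nat.multinomial Finset.univ k : ℝ) * ∏ i : Fin d, (q i) ^ (k i) := by
          apply Finset.single_le_sum _ hmem
          intro k _
          apply mul_nonneg (by positivity)
          exact Finset.prod_nonneg fun i _ => pow_nonneg (hq0 i) _
      _ = 1 := hmt.symm
  have hBexp : (Nat.multinomial Finset.univ nv : ℝ) ≤ Real.exp ((n : ℝ) *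
        (-∑ i, ((nv i : ℝ) / (n : ℝ)) * Real.log ((nv i : ℝ) / (n : ℝ)))) := by
    rw [eq_inv_of_mul_eq_one_left hexpT, ← one_div, le_div_iff₀ hTpos]
    exact hB
  have hpow : (1 : ℝ) ≤ ((n + d : ℕ) : ℝ) ^ (2 * d) := by
    have h1 : (1 : ℝ) ≤ ((n + d : ℕ) : ℝ) := by exact_mod_cast Nat.le_trans hn (Nat.le_add_right n d)
    exact one_le_pow₀ h1
  calc dimV nv n ≤ (Nat.multinomial Finset.univ nv : ℝ) := hA
    _ ≤ Real.exp _ := hBexp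
    _ ≤ ((n + d : ℕ) : ℝ) ^ (2 * d) * Real.exp _ := le_mul_of_one_le_left (Real.exp_pos _).le hpow
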